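/- For every n ≥ 7, every reset word for the automaton 𝒜_n has length at least 4n − 13; that is, the reset threshold of 𝒜_n is at least 4n − 13. -/

import Mathlib

/-- The two letters of a binary alphabet. -/
inductive Letter where
  | a : Letter
  | b : Letter
deriving DecidableEq

/-- The transition function of the automaton `𝒜ₙ` on the state set
`Qₙ = {0, 1, …, n-1}` (represented inside `ℕ`):
`δ(0,a)=δ(0,b)=0`; `δ(1,a)=0`, `δ(2,a)=4`, `δ(3,a)=2`, `δ(4,a)=3`;
`δ(1,b)=3`, `δ(2,b)=1`, `δ(3,b)=2`; and for `4 ≤ j ≤ n-1`: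
`δ(j,a) = j-1` if `j ≥ 6` is even, `δ(j,a) = j+1` if `j ≥ 5` is odd and
`j ≠ n-1`, `δ(j,a) = j` if `j = n-1` is odd; `δ(j,b) = j-1` if `j ≥ 5` is odd,
`δ(j,b) = j+1` if `j ≥ 4` is even and `j ≠ n-1`, `δ(j,b) = j` if `j = n-1`
is even. -/
def anDelta (n : ℕ) (q : ℕ) (ℓ : Letter) : ℕ :=
  match q, ℓ with
  | 0, _ => 0
  | 1, Letter.a => 0
  | 1, Letter.b => 3
  | 2, Letter.a => 4
  | 2, Letter.b => 1
  | 3, _ => 2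
  | 4, Letter.a => 3
  | j, Letter.a => if j % 2 = 1 then (if j = n - 1 then j else j + 1) else j - 1
  | j, Letter.b => if j % 2 = 0 then (if j = n - 1 then j else j + 1) else j - 1

/-- Extension of the transition function of `𝒜ₙ` to words:
`δ(q, uv) = δ(δ(q, u), v)`. -/
def anStar (n : ℕ) (q : ℕ) (w : List Letter) : ℕ :=
  w.foldl (anDelta n) q

/-!
A potential argument. For a set `S` of states put
`Φ(S) = 4 · |S ∩ [6, n)| + G(S ∩ {1, …, 6})`.
Both letters act injectively on the states `≥ 5`; `b` maps `[6, n)` onto itself, while `a` moves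
states across the boundary of `[6, n)` only by exchanging `5` and `6`. The weight `G` of the
window `{1, …, 6}` is chosen so that no letter lowers `Φ` by more than one. Since
`Φ(Qₙ) = 4n - 13`, `Φ({0}) = 0`, and a reset word maps `Qₙ` to the sink `{0}`, every reset word
has length at least `4n - 13`.
-/

open Finset

namespace AnReset

section General

variable {α : Type*} {S : Finset α}

lemma mem_image_iff_of_forall_eq_iff {β : Type*} [DecidableEq β] {f : α → β} {p : β} {r : α}
    (h : ∀ q, f q = p ↔ q = r) : p ∈ S.image f ↔ r ∈ S := by
  simp [h]

lemma card_filter_image_of_involutive [DecidableEq α] {f : α → α} {P : α → Prop} [DecidablePred P]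
    (h : ∀ q ∈ S, P (f q) → f (f q) = q) : #{q ∈ S.image f | P q} = #{q ∈ S | P (f q)} := by
  rw [filter_image, card_image_of_injOn]
  intro x hx y hy hxy
  simp only [coe_filter, Set.mem_ofPred_eq] at hx hy
  rw [← h x hx.1 hx.2, ← h y hy.1 hy.2, hxy]

lemma card_filter_eq_or [DecidableEq α] {P : α → Prop} [DecidablePred P] {m : α} (hm : ¬P m) :
    #{q ∈ S | q = m ∨ P q} = #{q ∈ S | P q} + (decide (m ∈ S)).toNat := by
  rw [filter_or, card_union_of_disjoint, filter_eq', add_comm]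
  · by_cases h : m ∈ S <;> simp [h]
  · exact disjoint_filter.2 fun q _ hq hPq => hm (hq ▸ hPq)

end General

variable {n q : ℕ}

lemma anDelta_zero (n : ℕ) (ℓ : Letter) : anDelta n 0 ℓ = 0 := by
  cases ℓ <;> rfl

lemma anStar_cons (n q : ℕ) (ℓ : Letter) (w : List Letter) :
    anStar n q (ℓ :: w) = anStar n (anDelta n q ℓ) w :=
  rfl

lemma anStar_zero (n : ℕ) (w : List Letter) : anStar n 0 w = 0 := by
  induction w with
  | nil => rfl
  | cons ℓ w ih => rw [anStar_cons, anDelta_zero, ih]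

lemma anDelta_a_of_five_le (h : 5 ≤ q) :
    anDelta n q .a = if q % 2 = 1 then (if q = n - 1 then q else q + 1) else q - 1 := by
  obtain ⟨k, rfl⟩ : ∃ k, q = k + 5 := ⟨q - 5, by omega⟩
  rfl

lemma anDelta_b_of_five_le (h : 5 ≤ q) :
    anDelta n q .b = if q % 2 = 0 then (if q = n - 1 then q else q + 1) else q - 1 := by
  obtain ⟨k, rfl⟩ : ∃ k, q = k + 5 := ⟨q - 5, by omega⟩
  rfl

lemma anDelta_lt (hn : 7 ≤ n) (hq : q < n) (ℓ : Letter) : anDelta n q ℓ < n := by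
  rcases lt_or_ge q 5 with h | h
  · interval_cases q <;> cases ℓ <;> simp [anDelta, show 4 ≠ n - 1 by omega] <;> omega
  · cases ℓ
    · rw [anDelta_a_of_five_le h]; split_ifs <;> omega
    · rw [anDelta_b_of_five_le h]; split_ifs <;> omega

lemma anDelta_a_anDelta_a (hq : q < n) (h : 5 ≤ q) : anDelta n (anDelta n q .a) .a = q := by
  rw [anDelta_a_of_five_le (q := q) h]
  split_ifs <;> rw [anDelta_a_of_five_le (by omega)] <;> split_ifs <;> omega

lemma anDelta_b_anDelta_b (hq : q < n) (h : 6 ≤ q) : anDelta n (anDelta n q .b) .b = q := by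
  rw [anDelta_b_of_five_le (q := q) (by omega)]
  split_ifs <;> rw [anDelta_b_of_five_le (by omega)] <;> split_ifs <;> omega

/-- `n` enters `anDelta n q` only through the test `q = n - 1`. -/
lemma anDelta_a_eq_anDelta_seven (hn : 7 ≤ n) (hq : q < 7) : anDelta n q .a = anDelta 7 q .a := by
  interval_cases q <;> simp [anDelta, show 5 ≠ n - 1 by omega]

lemma anDelta_b_eq_anDelta_seven (hn : 7 ≤ n) (hq : q < 6) : anDelta n q .b = anDelta 7 q .b := by
  interval_cases q <;> simp [anDelta, show 4 ≠ n - 1 by omega]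

lemma seven_le_anDelta_a (hq : 7 ≤ q) : 7 ≤ anDelta n q .a := by
  rw [anDelta_a_of_five_le (by omega)]; split_ifs <;> omega

lemma six_le_anDelta_b (hq : 6 ≤ q) : 6 ≤ anDelta n q .b := by
  rw [anDelta_b_of_five_le (by omega)]; split_ifs <;> omega

lemma anDelta_a_eq_iff (hn : 7 ≤ n) {p r : ℕ} (hp : p < 7) (hr : r < 7)
    (hsmall : ∀ q < 7, anDelta 7 q .a = p ↔ q = r) (q : ℕ) : anDelta n q .a = p ↔ q = r := by
  rcases lt_or_ge q 7 with hq | hq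
  · rw [anDelta_a_eq_anDelta_seven hn hq]
    exact hsmall q hq
  · have := seven_le_anDelta_a (n := n) hq
    omega

lemma anDelta_b_eq_iff (hn : 7 ≤ n) {p r : ℕ} (hp : p < 6) (hr : r < 6)
    (hsmall : ∀ q < 6, anDelta 7 q .b = p ↔ q = r) (q : ℕ) : anDelta n q .b = p ↔ q = r := by
  rcases lt_or_ge q 6 with hq | hq
  · rw [anDelta_b_eq_anDelta_seven hn hq]
    exact hsmall q hq
  · have := six_le_anDelta_b (n := n) hq
    omega

lemma anDelta_a_ne_one (hn : 7 ≤ n) (q : ℕ) : anDelta n q .a ≠ 1 := by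
  rcases lt_or_ge q 7 with hq | hq
  · rw [anDelta_a_eq_anDelta_seven hn hq]
    interval_cases q <;> decide
  · have := seven_le_anDelta_a (n := n) hq
    omega

lemma six_le_anDelta_a_iff (hn : 7 ≤ n) : 6 ≤ anDelta n q .a ↔ q = 5 ∨ 7 ≤ q := by
  rcases lt_or_ge q 7 with hq | hq
  · rw [anDelta_a_eq_anDelta_seven hn hq]
    interval_cases q <;> decide
  · simp only [hq, or_true, iff_true]
    exact (seven_le_anDelta_a hq).trans' (by norm_num)

lemma six_le_anDelta_b_iff (hn : 7 ≤ n) : 6 ≤ anDelta n q .b ↔ 6 ≤ q := by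
  rcases lt_or_ge q 6 with hq | hq
  · rw [anDelta_b_eq_anDelta_seven hn hq]
    interval_cases q <;> decide
  · simp only [hq, iff_true]
    exact six_le_anDelta_b hq

variable {S : Finset ℕ}

lemma card_tail_image_a (hn : 7 ≤ n) (hS : S ⊆ range n) :
    #{q ∈ S.image (anDelta n · .a) | 6 ≤ q} + (decide (6 ∈ S)).toNat
      = #{q ∈ S | 6 ≤ q} + (decide (5 ∈ S)).toNat := by
  have hinv : ∀ q ∈ S, 6 ≤ anDelta n q .a → anDelta n (anDelta n q .a) .a = q := fun q hq h6 =>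
    anDelta_a_anDelta_a (mem_range.1 (hS hq)) (by have := (six_le_anDelta_a_iff hn).1 h6; omega)
  rw [card_filter_image_of_involutive hinv, filter_congr fun q _ => six_le_anDelta_a_iff hn,
    filter_congr fun q _ => show 6 ≤ q ↔ q = 6 ∨ 7 ≤ q by omega,
    card_filter_eq_or (by norm_num), card_filter_eq_or (by norm_num)]
  omega

lemma card_tail_image_b (hn : 7 ≤ n) (hS : S ⊆ range n) :
    #{q ∈ S.image (anDelta n · .b) | 6 ≤ q} = #{q ∈ S | 6 ≤ q} := by
  have hinv : ∀ q ∈ S, 6 ≤ anDelta n q .b → anDelta n (anDelta n q .b) .b = q := fun q hq h6 =>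
    anDelta_b_anDelta_b (mem_range.1 (hS hq)) ((six_le_anDelta_b_iff hn).1 h6)
  simp only [card_filter_image_of_involutive hinv, six_le_anDelta_b_iff hn]

/-- `xᵢ` records whether state `i` is present. The table lists the least weight of a path to the
empty window in the system on `{1, …, 6}` where `a` acts as `(false, x₃, x₄, x₂, x₆, x₅)` and `b`
as `(x₂, x₃, x₁, x₅, x₄, t)` for arbitrary `t`, each step weighs `1`, and an `a`-step weighs `4`
more for a state moved from `5` to `6` and `4` less for one moved from `6` to `5`
(computed by Bellman–Ford). -/
def windowPotential (x₁ x₂ x₃ x₄ x₅ x₆ : Bool) : ℕ :=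
  [0, 1, 2, 3, 3, 3, 4, 6, 4, 4, 6, 6, 5, 5, 6, 7, 5, 5, 5, 5, 7, 7, 7, 8, 7, 7, 8, 9, 9, 9, 10,
    11, 1, 2, 2, 3, 2, 2, 4, 5, 4, 4, 6, 6, 4, 4, 6, 7, 5, 5, 5, 5, 6, 6, 7, 8, 7, 7, 8, 9, 8, 8,
    10, 11].getD (x₁.toNat + 2 * x₂.toNat + 4 * x₃.toNat + 8 * x₄.toNat + 16 * x₅.toNat
      + 32 * x₆.toNat) 0

lemma windowPotential_le_a : ∀ x₁ x₂ x₃ x₄ x₅ x₆ : Bool,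
    windowPotential x₁ x₂ x₃ x₄ x₅ x₆ + 4 * x₆.toNat
      ≤ windowPotential false x₃ x₄ x₂ x₆ x₅ + 4 * x₅.toNat + 1 := by
  decide

lemma windowPotential_le_b : ∀ x₁ x₂ x₃ x₄ x₅ x₆ t : Bool,
    windowPotential x₁ x₂ x₃ x₄ x₅ x₆ ≤ windowPotential x₂ x₃ x₁ x₅ x₄ t + 1 := by
  decide

def potential (S : Finset ℕ) : ℕ :=
  4 * #{q ∈ S | 6 ≤ q} + windowPotential (decide (1 ∈ S)) (decide (2 ∈ S)) (decide (3 ∈ S))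
    (decide (4 ∈ S)) (decide (5 ∈ S)) (decide (6 ∈ S))

lemma potential_le_image_a (hn : 7 ≤ n) (hS : S ⊆ range n) :
    potential S ≤ potential (S.image (anDelta n · .a)) + 1 := by
  have h1 : 1 ∉ S.image (anDelta n · .a) := by simp [anDelta_a_ne_one hn]
  have h2 : 2 ∈ S.image (anDelta n · .a) ↔ 3 ∈ S :=
    mem_image_iff_of_forall_eq_iff (anDelta_a_eq_iff hn (by norm_num) (by norm_num) (by decide))
  have h3 : 3 ∈ S.image (anDelta n · .a) ↔ 4 ∈ S :=
    mem_image_iff_of_forall_eq_iff (anDelta_a_eq_iff hn (by norm_num) (by norm_num) (by decide))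
  have h4 : 4 ∈ S.image (anDelta n · .a) ↔ 2 ∈ S :=
    mem_image_iff_of_forall_eq_iff (anDelta_a_eq_iff hn (by norm_num) (by norm_num) (by decide))
  have h5 : 5 ∈ S.image (anDelta n · .a) ↔ 6 ∈ S :=
    mem_image_iff_of_forall_eq_iff (anDelta_a_eq_iff hn (by norm_num) (by norm_num) (by decide))
  have h6 : 6 ∈ S.image (anDelta n · .a) ↔ 5 ∈ S :=
    mem_image_iff_of_forall_eq_iff (anDelta_a_eq_iff hn (by norm_num) (by norm_num) (by decide))
  have := card_tail_image_a hn hS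
  have := windowPotential_le_a (decide (1 ∈ S)) (decide (2 ∈ S)) (decide (3 ∈ S))
    (decide (4 ∈ S)) (decide (5 ∈ S)) (decide (6 ∈ S))
  simp only [potential, h1, h2, h3, h4, h5, h6, decide_false]
  omega

lemma potential_le_image_b (hn : 7 ≤ n) (hS : S ⊆ range n) :
    potential S ≤ potential (S.image (anDelta n · .b)) + 1 := by
  have h1 : 1 ∈ S.image (anDelta n · .b) ↔ 2 ∈ S :=
    mem_image_iff_of_forall_eq_iff (anDelta_b_eq_iff hn (by norm_num) (by norm_num) (by decide))
  have h2 : 2 ∈ S.image (anDelta n · .b) ↔ 3 ∈ S :=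
    mem_image_iff_of_forall_eq_iff (anDelta_b_eq_iff hn (by norm_num) (by norm_num) (by decide))
  have h3 : 3 ∈ S.image (anDelta n · .b) ↔ 1 ∈ S :=
    mem_image_iff_of_forall_eq_iff (anDelta_b_eq_iff hn (by norm_num) (by norm_num) (by decide))
  have h4 : 4 ∈ S.image (anDelta n · .b) ↔ 5 ∈ S :=
    mem_image_iff_of_forall_eq_iff (anDelta_b_eq_iff hn (by norm_num) (by norm_num) (by decide))
  have h5 : 5 ∈ S.image (anDelta n · .b) ↔ 4 ∈ S :=
    mem_image_iff_of_forall_eq_iff (anDelta_b_eq_iff hn (by norm_num) (by norm_num) (by decide))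
  have := card_tail_image_b hn hS
  have := windowPotential_le_b (decide (1 ∈ S)) (decide (2 ∈ S)) (decide (3 ∈ S))
    (decide (4 ∈ S)) (decide (5 ∈ S)) (decide (6 ∈ S))
    (decide (6 ∈ S.image (anDelta n · .b)))
  simp only [potential, h1, h2, h3, h4, h5]
  omega

lemma potential_le_image_add_one (hn : 7 ≤ n) (hS : S ⊆ range n) (ℓ : Letter) :
    potential S ≤ potential (S.image (anDelta n · ℓ)) + 1 := by
  cases ℓ
  · exact potential_le_image_a hn hS
  · exact potential_le_image_b hn hS

lemma image_anDelta_subset_range (hn : 7 ≤ n) (hS : S ⊆ range n) (ℓ : Letter) :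
    S.image (anDelta n · ℓ) ⊆ range n := by
  simpa [image_subset_iff] using fun q hq => anDelta_lt hn (mem_range.1 (hS hq)) ℓ

lemma potential_le_image_anStar_add_length (hn : 7 ≤ n) (w : List Letter) (hS : S ⊆ range n) :
    potential S ≤ potential (S.image (anStar n · w)) + w.length := by
  induction w generalizing S with
  | nil => simp [anStar]
  | cons ℓ w ih =>
    calc potential S ≤ potential (S.image (anDelta n · ℓ)) + 1 :=
          potential_le_image_add_one hn hS ℓ
      _ ≤ potential ((S.image (anDelta n · ℓ)).image (anStar n · w)) + w.length + 1 := by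
          gcongr
          exact ih (image_anDelta_subset_range hn hS ℓ)
      _ = potential (S.image (anStar n · (ℓ :: w))) + (ℓ :: w).length := by
          rw [image_image, List.length_cons, add_assoc]
          rfl

lemma potential_range (hn : 7 ≤ n) : potential (range n) = 4 * n - 13 := by
  have htail : #{q ∈ range n | 6 ≤ q} = n - 6 := by
    rw [← Nat.card_Ico, range_eq_Ico, Ico_filter_le, max_eq_right (by omega)]
  simp only [potential, htail, mem_range, show 6 < n by omega, show 5 < n by omega,
    show 4 < n by omega, show 3 < n by omega, show 2 < n by omega, show 1 < n by omega,
    decide_true]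
  rw [show windowPotential true true true true true true = 11 from rfl]
  omega

lemma potential_singleton_zero : potential {0} = 0 := by
  simp [potential, windowPotential]

lemma image_range_anStar_of_reset (hn : 0 < n) {w : List Letter}
    (hw : ∀ p q : ℕ, p < n → q < n → anStar n p w = anStar n q w) :
    (range n).image (anStar n · w) = {0} := by
  ext p
  simp only [mem_image, mem_range, mem_singleton]
  constructor
  · rintro ⟨q, hq, rfl⟩
    rw [hw q 0 hq hn, anStar_zero]
  · rintro rfl
    exact ⟨0, hn, anStar_zero n w⟩

end AnReset

/-- For every `n ≥ 7`, every reset word for the automaton `𝒜ₙ` has length at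
least `4n - 13`; that is, the reset threshold of `𝒜ₙ` is at least `4n - 13`. -/
theorem an_resetThreshold_lower_bound (n : ℕ) (hn : 7 ≤ n) :
    ∀ w : List Letter,
      (∀ p q : ℕ, p < n → q < n → anStar n p w = anStar n q w) →
      4 * n - 13 ≤ w.length := by
  intro w hw
  have := AnReset.potential_le_image_anStar_add_length hn w subset_rfl
  rwa [AnReset.image_range_anStar_of_reset (by omega) hw, AnReset.potential_range hn,
    AnReset.potential_singleton_zero, zero_add] at this
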